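/- Let R be an RC-closed collection of strings over the DNA alphabet and let X be a nonempty string over the DNA alphabet. Then the set of distinct right-context symbols of the occurrences of X in strings of R equals the image under the complement permutation π of the set of distinct left-context symbols of the occurrences of the reverse complement X̂ in strings of R. -/

import Mathlib

/-- The DNA alphabet Σ = {A, C, G, T}. -/
inductive Base : Type
  | A | C | G | T
  deriving DecidableEq, Repr

instance : Fintype Base where
  elems := {.A, .C, .G, .T}
  complete := fun x => by cases x <;> simp

/-- The DNA complement permutation π: A ↔ T, C ↔ G. -/
def comp : Base → Base
  | .A => .T
  | .T => .A
  | .C => .G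
  | .G => .C

/-- The reverse complement Ŵ of a DNA string W. -/
def revComp (W : List Base) : List Base := W.reverse.map comp

/-- `W` occurs in `T` at (0-indexed) position `i`, i.e. `T[i..i+|W|-1] = W`. -/
def occursAt (W T : List Base) (i : ℕ) : Prop :=
  i + W.length ≤ T.length ∧ (T.drop i).take W.length = W

instance (W T : List Base) : DecidablePred (occursAt W T) := fun i =>
  inferInstanceAs (Decidable (_ ∧ _))

/-- The number of occurrences of `W` in `T`. -/
noncomputable def occCount (W T : List Base) : ℕ := {i | occursAt W T i}.ncard

/-- The alphabet with the sentinel `$`: the sentinel is `⊥`, the DNA symbols are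
coerced. The complement permutation is extended by `π($) = $`
(i.e. `WithBot.map comp ⊥ = ⊥`). -/
abbrev SymB := WithBot Base

/-- Left-context symbol of an occurrence of a string at (0-indexed) position `i`
in `T`: the symbol `T[i-1]` if `i > 0`, and the sentinel `$` otherwise. -/
def leftCtx (T : List Base) (i : ℕ) : SymB :=
  if i = 0 then ⊥ else (T[i-1]?).elim ⊥ (fun a => (a : SymB))

/-- Right-context symbol of an occurrence of a string of length `m` at
(0-indexed) position `i` in `T`: the symbol `T[i+m]` if the occurrence does not
end at the last position of `T`, and the sentinel `$` otherwise. -/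
def rightCtx (T : List Base) (m i : ℕ) : SymB :=
  (T[i+m]?).elim ⊥ (fun a => (a : SymB))

/-- A collection (multiset) of strings is RC-closed if every string has the same
multiplicity as its reverse complement. -/
def RCClosed (R : Multiset (List Base)) : Prop :=
  ∀ T : List Base, R.count T = R.count (revComp T)

/-- The set of distinct left-context symbols of the occurrences of `X` in
strings of `R`. -/
def leftCtxSet (R : Multiset (List Base)) (X : List Base) : Set SymB :=
  {c | ∃ T ∈ R, ∃ i : ℕ, occursAt X T i ∧ leftCtx T i = c}

/-- The set of distinct right-context symbols of the occurrences of `X` in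
strings of `R`. -/
def rightCtxSet (R : Multiset (List Base)) (X : List Base) : Set SymB :=
  {c | ∃ T ∈ R, ∃ i : ℕ, occursAt X T i ∧ rightCtx T X.length i = c}

/-!
Reverse complementation maps an occurrence `T = pre ++ X ++ suf` to the occurrence
`T̂ = ŝuf ++ X̂ ++ p̂re`, and the first symbol of `suf` (the right context of `X`) becomes,
complemented, the last symbol of `ŝuf` (the left context of `X̂`); the sentinel is fixed.
Since `R` is RC-closed, `T̂` is again in `R`, and as both operations are involutions
the two inclusions give the equality.
-/

lemma comp_involutive : Function.Involutive comp := by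
  intro a; cases a <;> rfl

lemma revComp_involutive : Function.Involutive revComp := by
  intro T
  simp [revComp, comp_involutive.comp_self]

lemma revComp_append (a b : List Base) : revComp (a ++ b) = revComp b ++ revComp a := by
  simp [revComp]

lemma revComp_append_append (pre W suf : List Base) :
    revComp (pre ++ W ++ suf) = revComp suf ++ revComp W ++ revComp pre := by
  simp only [revComp_append, List.append_assoc]

lemma head?_revComp (l : List Base) : (revComp l).head? = l.getLast?.map comp := by
  simp [revComp, List.head?_reverse]

lemma getLast?_revComp (l : List Base) : (revComp l).getLast? = l.head?.map comp := by
  simp [revComp, List.getLast?_reverse]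

lemma RCClosed.revComp_mem {R : Multiset (List Base)} (hR : RCClosed R) {T : List Base}
    (hT : T ∈ R) : revComp T ∈ R := by
  rwa [← Multiset.count_pos, ← hR T, Multiset.count_pos]

lemma occursAt_append (pre W suf : List Base) : occursAt W (pre ++ W ++ suf) pre.length := by
  refine ⟨by simp, ?_⟩
  rw [List.append_assoc, List.drop_left]
  simp

lemma exists_eq_append_of_occursAt {W T : List Base} {i : ℕ} (h : occursAt W T i) :
    ∃ pre suf, T = pre ++ W ++ suf ∧ pre.length = i := by
  obtain ⟨hlen, hW⟩ := h
  refine ⟨T.take i, T.drop (i + W.length), ?_, by simp; omega⟩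
  conv_lhs => rw [← List.take_append_drop i T, ← List.take_append_drop W.length (T.drop i)]
  rw [hW, List.drop_drop, List.append_assoc]

lemma rightCtx_append (pre W suf : List Base) :
    rightCtx (pre ++ W ++ suf) W.length pre.length = suf.head?.elim ⊥ (↑) := by
  unfold rightCtx
  rw [List.getElem?_append_right (by simp)]
  simp [List.head?_eq_getElem?]

lemma leftCtx_append (pre W suf : List Base) :
    leftCtx (pre ++ W ++ suf) pre.length = pre.getLast?.elim ⊥ (↑) := by
  unfold leftCtx
  rcases List.eq_nil_or_concat pre with rfl | ⟨l, a, rfl⟩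
  · simp
  · rw [if_neg (by simp), List.append_assoc, List.getElem?_append_left (by simp)]
    simp [List.getLast?_eq_getElem?]

lemma withBotMap_comp_involutive : Function.Involutive (WithBot.map comp) := by
  intro c
  cases c with
  | bot => rfl
  | coe a => exact congrArg _ (comp_involutive a)

lemma map_comp_elim (o : Option Base) :
    WithBot.map comp (o.elim ⊥ (↑)) = (o.map comp).elim ⊥ (↑) := by
  cases o <;> rfl

section ContextSets

variable {R : Multiset (List Base)}

lemma image_map_comp_rightCtxSet_subset (hR : RCClosed R) (W : List Base) :
    WithBot.map comp '' rightCtxSet R W ⊆ leftCtxSet R (revComp W) := by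
  rintro _ ⟨_, ⟨T, hT, i, hocc, rfl⟩, rfl⟩
  obtain ⟨pre, suf, rfl, rfl⟩ := exists_eq_append_of_occursAt hocc
  refine ⟨_, hR.revComp_mem hT, (revComp suf).length, ?_, ?_⟩
  · rw [revComp_append_append]
    exact occursAt_append _ _ _
  · rw [revComp_append_append, leftCtx_append, rightCtx_append, map_comp_elim,
      getLast?_revComp]

lemma image_map_comp_leftCtxSet_subset (hR : RCClosed R) (W : List Base) :
    WithBot.map comp '' leftCtxSet R W ⊆ rightCtxSet R (revComp W) := by
  rintro _ ⟨_, ⟨T, hT, i, hocc, rfl⟩, rfl⟩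
  obtain ⟨pre, suf, rfl, rfl⟩ := exists_eq_append_of_occursAt hocc
  refine ⟨_, hR.revComp_mem hT, (revComp suf).length, ?_, ?_⟩
  · rw [revComp_append_append]
    exact occursAt_append _ _ _
  · rw [revComp_append_append, rightCtx_append, leftCtx_append, map_comp_elim,
      head?_revComp]

end ContextSets

theorem stmt_4_general (R : Multiset (List Base)) (hR : RCClosed R)
    (X : List Base) :
    rightCtxSet R X = (WithBot.map comp) '' (leftCtxSet R (revComp X)) := by
  refine Set.Subset.antisymm ?_ ?_
  · rw [withBotMap_comp_involutive.image_eq_preimage_symm, ← Set.image_subset_iff]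
    exact image_map_comp_rightCtxSet_subset hR X
  · simpa [revComp_involutive X] using image_map_comp_leftCtxSet_subset hR (revComp X)

/-- in an RC-closed collection `R`, for a nonempty DNA string `X`,
the set of distinct right-context symbols of the occurrences of `X` equals the
image under the (extended) complement permutation of the set of distinct
left-context symbols of the occurrences of `X̂`. -/
theorem stmt_4 (R : Multiset (List Base)) (hR : RCClosed R)
    (X : List Base) (hX : X ≠ []) :
    rightCtxSet R X = (WithBot.map comp) '' (leftCtxSet R (revComp X)) :=
  stmt_4_general R hR X
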